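/- Let $\gamma \in [-1,1)$, $K_\gamma(y) = y^\perp/|y|^{3+\gamma}$, and let $g_N(r,\alpha) = \tilde{g}_N(r)\sin(N\alpha + N\alpha_0(r,t))$ where $\tilde{g}_N$ is smooth with support in $(R_0,R_1)$ and $\alpha_0$ is smooth. Then there exists $C > 0$ depending on $R_0, R_1, \gamma$ such that for all $x \in \mathbb{R}^2$, $\Big|C(\gamma)\int_{\{1/N < |x-y| < 3R_1\}} \hat{x}^\perp\cdot K_\gamma(x-y)\, g_N(y)\,dy\Big| \le C\|\tilde{g}_N\|_{L^\infty} N^\gamma$. -/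

import Mathlib

open MeasureTheory Real

noncomputable abbrev E2 := EuclideanSpace ℝ (Fin 2)

/-- The constant `C(γ) = Γ((1+γ)/2) / (2^(1-γ) π Γ((1-γ)/2))`. -/
noncomputable def Cgamma (γ : ℝ) : ℝ :=
  Real.Gamma ((1 + γ) / 2) / (2 ^ (1 - γ) * Real.pi * Real.Gamma ((1 - γ) / 2))

/-- Polar angle of a point of the plane. -/
noncomputable def polarAngle (y : E2) : ℝ :=
  Complex.arg ((y 0 : ℂ) + (y 1 : ℂ) * Complex.I)

/-- The oscillatory function `g_N(r,α) = g̃_N(r) sin(Nα + N α₀(r))` viewed as a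
function on the plane. -/
noncomputable def planeFun (gt α₀ : ℝ → ℝ) (N : ℕ) (y : E2) : ℝ :=
  gt ‖y‖ * Real.sin (N * polarAngle y + N * α₀ ‖y‖)

/-- `x̂^⊥ · K_γ(x-y)` where `K_γ(z) = z^⊥/|z|^{3+γ}` and `(a,b)^⊥ = (-b,a)`;
note `x^⊥ · z^⊥ = x · z`. -/
noncomputable def angularKernel (γ : ℝ) (x y : E2) : ℝ :=
  (x 0 * (x 0 - y 0) + x 1 * (x 1 - y 1)) / (‖x‖ * ‖x - y‖ ^ (3 + γ))

namespace TruncAux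


/-- complexification of a point of the plane -/
noncomputable def zC (y : E2) : ℂ := (y 0 : ℂ) + (y 1 : ℂ) * Complex.I

lemma zC_eq (y : E2) : zC y = Complex.orthonormalBasisOneI.repr.symm y := by
  simp [zC]

lemma abs_zC (y : E2) : ‖zC y‖ = ‖y‖ := by
  rw [zC_eq]
  exact Complex.orthonormalBasisOneI.repr.symm.norm_map y

lemma zC_ne_zero {y : E2} (hy : y ≠ 0) : zC y ≠ 0 := by
  intro h
  apply hy
  have := abs_zC y
  rw [h, norm_zero] at this
  exact norm_eq_zero.mp this.symm

lemma polarAngle_eq (y : E2) : polarAngle y = (zC y).arg := rfl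

/-- rotation of the plane by angle θ -/
noncomputable def rotE (θ : ℝ) : E2 ≃ₗᵢ[ℝ] E2 :=
  (Complex.orthonormalBasisOneI.repr.symm.trans (rotation (Circle.exp θ))).trans
    Complex.orthonormalBasisOneI.repr

lemma zC_rotE (θ : ℝ) (y : E2) :
    zC (rotE θ y) = Complex.exp (θ * Complex.I) * zC y := by
  rw [zC_eq, zC_eq, rotE]
  simp [Circle.coe_exp]

lemma dist_rotE_le (θ : ℝ) (y : E2) : dist y (rotE θ y) ≤ |θ| * ‖y‖ := by
  have h1 : dist y (rotE θ y) = ‖zC y - zC (rotE θ y)‖ := by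
    rw [zC_eq, zC_eq, ← Complex.dist_eq]
    exact (Complex.orthonormalBasisOneI.repr.symm.dist_map y (rotE θ y)).symm
  rw [h1, zC_rotE]
  have h2 : zC y - Complex.exp (θ * Complex.I) * zC y
      = (1 - Complex.exp (θ * Complex.I)) * zC y := by ring
  rw [h2, norm_mul, abs_zC]
  gcongr
  -- |1 - e^{iθ}| ≤ |θ|
  have hre : (1 - Complex.exp (θ * Complex.I)).re = 1 - Real.cos θ := by
    simp [Complex.exp_ofReal_mul_I_re]
  have him : (1 - Complex.exp (θ * Complex.I)).im = - Real.sin θ := by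
    simp [Complex.exp_ofReal_mul_I_im]
  have hsq : ‖1 - Complex.exp (θ * Complex.I)‖ ^ 2 = 2 - 2 * Real.cos θ := by
    rw [Complex.sq_norm, Complex.normSq_apply, hre, him]
    nlinarith [Real.sin_sq_add_cos_sq θ]
  have hle : ‖1 - Complex.exp (θ * Complex.I)‖ ^ 2 ≤ θ ^ 2 := by
    rw [hsq]
    nlinarith [Real.one_sub_sq_div_two_le_cos (x := θ)]
  calc ‖1 - Complex.exp (θ * Complex.I)‖
      = Real.sqrt (‖1 - Complex.exp (θ * Complex.I)‖ ^ 2) := by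
        rw [Real.sqrt_sq (norm_nonneg _)]
    _ ≤ Real.sqrt (θ ^ 2) := Real.sqrt_le_sqrt hle
    _ = |θ| := Real.sqrt_sq_eq_abs θ

lemma sin_rot (N : ℕ) (hN : 0 < N) {y : E2} (hy : y ≠ 0) (c : ℝ) :
    Real.sin (N * polarAngle (rotE (π / N) y) + c) = - Real.sin (N * polarAngle y + c) := by
  have hNR : (N : ℝ) ≠ 0 := Nat.cast_ne_zero.mpr hN.ne'
  set u := Complex.exp ((π / N : ℝ) * Complex.I) with hu
  have hz : zC y ≠ 0 := zC_ne_zero hy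
  have hune : u ≠ 0 := Complex.exp_ne_zero _
  have habsu : ‖u‖ = 1 := Complex.norm_exp_ofReal_mul_I _
  have hexp : ∀ w : ℂ, w ≠ 0 →
      Complex.exp (((N : ℝ) * w.arg : ℝ) * Complex.I) = (w / ((‖w‖ : ℝ) : ℂ)) ^ N := by
    intro w hw
    have h1 : Complex.exp (w.arg * Complex.I) = w / ((‖w‖ : ℝ) : ℂ) := by
      rw [eq_div_iff (by exact_mod_cast norm_ne_zero_iff.mpr hw), mul_comm]
      exact (Complex.norm_mul_exp_arg_mul_I w)
    rw [← h1, ← Complex.exp_nat_mul]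
    push_cast
    ring_nf
  have huN : u ^ N = -1 := by
    rw [hu, ← Complex.exp_nat_mul, ← Complex.exp_pi_mul_I]
    congr 1
    push_cast
    field_simp
    exact div_self (show (N:ℂ) ≠ 0 from Nat.cast_ne_zero.mpr hN.ne')
  have e1 : Complex.exp (((N : ℝ) * polarAngle (rotE (π / N) y) : ℝ) * Complex.I)
      = Complex.exp (((N : ℝ) * polarAngle y + π : ℝ) * Complex.I) := by
    have lhs1 : Complex.exp (((N : ℝ) * polarAngle (rotE (π / N) y) : ℝ) * Complex.I)
        = (u * zC y / ((‖u * zC y‖ : ℝ) : ℂ)) ^ N := by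
      rw [polarAngle_eq, zC_rotE, ← hu]
      exact hexp _ (mul_ne_zero hune hz)
    have rhs1 : Complex.exp (((N : ℝ) * polarAngle y + π : ℝ) * Complex.I)
        = (zC y / ((‖zC y‖ : ℝ) : ℂ)) ^ N * (-1) := by
      have : (((N : ℝ) * polarAngle y + π : ℝ) : ℂ) * Complex.I
          = (((N : ℝ) * polarAngle y : ℝ) : ℂ) * Complex.I + (π : ℂ) * Complex.I := by
        push_cast; ring
      rw [this, polarAngle_eq, Complex.exp_add, hexp _ hz, Complex.exp_pi_mul_I]
    rw [lhs1, rhs1, norm_mul, habsu, one_mul]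
    rw [mul_div_assoc, mul_pow, huN]
    ring
  obtain ⟨n, hn⟩ := Complex.exp_eq_exp_iff_exists_int.mp e1
  have hr : (N : ℝ) * polarAngle (rotE (π / N) y)
      = (N : ℝ) * polarAngle y + π + (n : ℝ) * (2 * π) := by
    have h2 : (((N : ℝ) * polarAngle (rotE (π / N) y) : ℝ) : ℂ)
        = (((N : ℝ) * polarAngle y + π + (n : ℝ) * (2 * π) : ℝ) : ℂ) := by
      have hIne : (Complex.I : ℂ) ≠ 0 := Complex.I_ne_zero
      apply mul_right_cancel₀ hIne
      rw [hn]
      push_cast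
      ring
    exact_mod_cast h2
  rw [hr]
  have h3 : (N : ℝ) * polarAngle y + π + (n : ℝ) * (2 * π) + c
      = ((N : ℝ) * polarAngle y + c + π) + (n : ℝ) * (2 * π) := by ring
  rw [h3, Real.sin_add_int_mul_two_pi, Real.sin_add_pi]

lemma planeFun_rot (gt α₀ : ℝ → ℝ) (hgt0 : gt 0 = 0) (N : ℕ) (hN : 0 < N) (y : E2) :
    planeFun gt α₀ N (rotE (π / N) y) = - planeFun gt α₀ N y := by
  by_cases hy : y = 0
  · subst hy
    rw [map_zero]
    simp [planeFun, hgt0]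
  · unfold planeFun
    rw [(rotE (π / N)).norm_map y, sin_rot N hN hy ((N : ℝ) * α₀ ‖y‖)]
    ring



lemma num_eq_inner (x y : E2) :
    x 0 * (x 0 - y 0) + x 1 * (x 1 - y 1) = (inner ℝ x (x - y) : ℝ) := by
  rw [PiLp.inner_apply, Fin.sum_univ_two]
  simp [RCLike.inner_apply]
  ring

lemma num_abs_le (x y : E2) :
    |x 0 * (x 0 - y 0) + x 1 * (x 1 - y 1)| ≤ ‖x‖ * dist x y := by
  rw [num_eq_inner, dist_eq_norm]
  exact abs_real_inner_le_norm x (x - y)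

lemma kernel_abs_le {γ : ℝ} (hγ : 0 < 3 + γ) {x : E2} (hx : x ≠ 0) (y : E2) :
    |angularKernel γ x y| ≤ dist x y ^ (-(2 + γ)) := by
  by_cases hyx : y = x
  · subst hyx
    have h0 : angularKernel γ y y = 0 := by
      unfold angularKernel
      rw [show y 0 * (y 0 - y 0) + y 1 * (y 1 - y 1) = 0 by ring, zero_div]
    rw [h0, abs_zero]
    positivity
  · have hs : 0 < dist x y := dist_pos.mpr (fun h => hyx h.symm)
    have hxn : 0 < ‖x‖ := norm_pos_iff.mpr hx
    have hden : 0 < ‖x‖ * ‖x - y‖ ^ (3 + γ) := by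
      apply mul_pos hxn
      apply Real.rpow_pos_of_pos
      rw [← dist_eq_norm]; exact hs
    unfold angularKernel
    rw [abs_div, abs_of_pos hden]
    rw [div_le_iff₀ hden]
    calc |x 0 * (x 0 - y 0) + x 1 * (x 1 - y 1)| ≤ ‖x‖ * dist x y := num_abs_le x y
      _ = dist x y ^ (-(2+γ)) * (‖x‖ * ‖x - y‖ ^ (3 + γ)) := by
          rw [← dist_eq_norm]
          rw [show (3 + γ : ℝ) = 1 + (2 + γ) by ring, Real.rpow_add hs, Real.rpow_one]
          rw [Real.rpow_neg hs.le]
          field_simp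
    
lemma kernel_abs_le' {γ : ℝ} (hγ : 0 < 3 + γ) (hγ' : 0 ≤ 2 + γ) {x : E2} (hx : x ≠ 0)
    {y : E2} {r : ℝ} (hr : 0 < r) (hry : r ≤ dist x y) :
    |angularKernel γ x y| ≤ r ^ (-(2 + γ)) :=
  (kernel_abs_le hγ hx y).trans
    (Real.rpow_le_rpow_of_nonpos hr hry (by linarith))

lemma rpow_diff_le {p m a b : ℝ} (hp : 0 < p) (hm : 0 < m) (ha : m ≤ a) (hb : m ≤ b) :
    |a ^ (-p) - b ^ (-p)| ≤ p * m ^ (-(p + 1)) * |a - b| := by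
  have key := Convex.norm_image_sub_le_of_norm_hasDerivWithin_le
    (f := fun t : ℝ => t ^ (-p)) (f' := fun t : ℝ => (-p) * t ^ (-p - 1))
    (s := Set.Ici m) (C := p * m ^ (-(p + 1)))
    (fun t ht => (Real.hasDerivAt_rpow_const
        (Or.inl (by exact (hm.trans_le ht).ne'))).hasDerivWithinAt)
    (fun t ht => by
      rw [Real.norm_eq_abs, abs_mul, abs_neg, abs_of_pos hp,
        abs_of_nonneg (Real.rpow_nonneg (hm.le.trans ht) _)]
      gcongr
      have := Real.rpow_le_rpow_of_nonpos hm ht (show -p-1 ≤ 0 by linarith)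
      rw [show (-(p+1) : ℝ) = -p - 1 by ring]
      exact this)
    (convex_Ici m) hb ha
  rw [Real.norm_eq_abs, Real.norm_eq_abs] at key
  calc |a ^ (-p) - b ^ (-p)| ≤ p * m ^ (-(p+1)) * |a - b| := key
    _ = p * m ^ (-(p + 1)) * |a - b| := rfl

lemma kernel_diff_le {γ : ℝ} (hγ : 0 < 3 + γ) {x : E2} (hx : x ≠ 0) (y y' : E2)
    {m : ℝ} (hm : 0 < m) (hs : m ≤ dist x y) (hs' : m ≤ dist x y') :
    |angularKernel γ x y - angularKernel γ x y'| ≤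
      dist x y ^ (-(3 + γ)) * dist y y'
        + (3 + γ) * dist x y' * m ^ (-(4 + γ)) * dist y y' := by
  have hxn : 0 < ‖x‖ := norm_pos_iff.mpr hx
  have hs0 : 0 < dist x y := hm.trans_le hs
  have hs'0 : 0 < dist x y' := hm.trans_le hs'
  set s := dist x y with hsdef
  set s' := dist x y' with hs'def
  have hns : ‖x - y‖ = s := (dist_eq_norm x y).symm
  have hns' : ‖x - y'‖ = s' := (dist_eq_norm x y').symm
  have hsp : (0:ℝ) < s ^ (3 + γ) := Real.rpow_pos_of_pos hs0 _
  have hs'p : (0:ℝ) < s' ^ (3 + γ) := Real.rpow_pos_of_pos hs'0 _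
  -- decomposition
  have hdecomp : angularKernel γ x y - angularKernel γ x y'
      = (inner ℝ x (y' - y) : ℝ) / (‖x‖ * s ^ (3 + γ))
        + (inner ℝ x (x - y') : ℝ) * (s ^ (-(3+γ)) - s' ^ (-(3+γ))) / ‖x‖ := by
    unfold angularKernel
    rw [num_eq_inner, num_eq_inner, hns, hns']
    have hinner : (inner ℝ x (x - y) : ℝ) = inner ℝ x (x - y') + (inner ℝ x (y' - y) : ℝ) := by
      rw [← inner_add_right]
      congr 1
      abel
    rw [hinner, Real.rpow_neg hs0.le, Real.rpow_neg hs'0.le]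
    field_simp
    ring
  rw [hdecomp]
  have h1 : |(inner ℝ x (y' - y) : ℝ) / (‖x‖ * s ^ (3 + γ))| ≤ s ^ (-(3+γ)) * dist y y' := by
    rw [abs_div, abs_of_pos (mul_pos hxn hsp), div_le_iff₀ (mul_pos hxn hsp)]
    calc |(inner ℝ x (y' - y) : ℝ)| ≤ ‖x‖ * ‖y' - y‖ := abs_real_inner_le_norm x (y' - y)
      _ = ‖x‖ * dist y y' := by rw [← dist_eq_norm, dist_comm]
      _ = s ^ (-(3+γ)) * dist y y' * (‖x‖ * s ^ (3+γ)) := by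
          rw [Real.rpow_neg hs0.le]
          field_simp
  have h2 : |(inner ℝ x (x - y') : ℝ) * (s ^ (-(3+γ)) - s' ^ (-(3+γ))) / ‖x‖|
      ≤ (3 + γ) * s' * m ^ (-(4 + γ)) * dist y y' := by
    rw [abs_div, abs_of_pos hxn, abs_mul, div_le_iff₀ hxn]
    have hd : |s ^ (-(3+γ)) - s' ^ (-(3+γ))| ≤ (3+γ) * m ^ (-((3+γ)+1)) * |s - s'| :=
      rpow_diff_le hγ hm hs hs'
    have hss' : |s - s'| ≤ dist y y' := by
      rw [hsdef, hs'def, dist_comm x y, dist_comm x y']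
      exact abs_dist_sub_le y y' x
    calc |(inner ℝ x (x - y') : ℝ)| * |s ^ (-(3+γ)) - s' ^ (-(3+γ))|
        ≤ (‖x‖ * s') * ((3+γ) * m ^ (-((3+γ)+1)) * dist y y') := by
          apply mul_le_mul
          · rw [← hns']
            exact abs_real_inner_le_norm x (x - y')
          · exact hd.trans (mul_le_mul_of_nonneg_left hss' (by positivity))
          · exact abs_nonneg _
          · positivity
      _ = (3 + γ) * s' * m ^ (-(4 + γ)) * dist y y' * ‖x‖ := by
          rw [show -((3+γ)+1) = -(4+γ) by ring]
          ring
  calc |(inner ℝ x (y' - y) : ℝ) / (‖x‖ * s ^ (3 + γ))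
        + (inner ℝ x (x - y') : ℝ) * (s ^ (-(3+γ)) - s' ^ (-(3+γ))) / ‖x‖|
      ≤ |(inner ℝ x (y' - y) : ℝ) / (‖x‖ * s ^ (3 + γ))|
        + |(inner ℝ x (x - y') : ℝ) * (s ^ (-(3+γ)) - s' ^ (-(3+γ))) / ‖x‖| := abs_add_le _ _
    _ ≤ s ^ (-(3+γ)) * dist y y' + (3 + γ) * s' * m ^ (-(4 + γ)) * dist y y' :=
        add_le_add h1 h2



lemma measurableSet_shell (x : E2) (a b : ℝ) :
    MeasurableSet {y : E2 | a < dist x y ∧ dist x y < b} := by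
  have hc : Continuous fun y : E2 => dist x y := continuous_const.dist continuous_id
  have : {y : E2 | a < dist x y ∧ dist x y < b} = (fun y : E2 => dist x y) ⁻¹' Set.Ioo a b := by
    ext y; simp [Set.mem_Ioo]
  rw [this]
  exact (isOpen_Ioo.preimage hc).measurableSet

lemma radial_eq (x : E2) (a b q : ℝ) (ha : 0 < a) :
    ∫ y in {y : E2 | a < dist x y ∧ dist x y < b}, dist x y ^ q =
      2 * (volume (Metric.ball (0:E2) 1)).toReal * ∫ t in Set.Ioo a b, t ^ (q+1) := by
  set φ : ℝ → ℝ := (Set.Ioo a b).indicator (fun t => t ^ q) with hφ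
  have e1 : ∫ y in {y : E2 | a < dist x y ∧ dist x y < b}, dist x y ^ q
      = ∫ y : E2, φ (dist x y) := by
    have hfun : {y : E2 | a < dist x y ∧ dist x y < b}.indicator (fun y => dist x y ^ q)
        = fun y => φ (dist x y) := by
      funext y
      by_cases h : dist x y ∈ Set.Ioo a b
      · rw [Set.indicator_of_mem (show y ∈ {y : E2 | a < dist x y ∧ dist x y < b}
            from ⟨h.1, h.2⟩), hφ, Set.indicator_of_mem h]
      · rw [Set.indicator_of_notMem (show y ∉ {y : E2 | a < dist x y ∧ dist x y < b}
            from h), hφ, Set.indicator_of_notMem h]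
    rw [← integral_indicator (measurableSet_shell x a b), hfun]
  have e2 : ∫ y : E2, φ (dist x y) = ∫ z : E2, φ ‖z‖ := by
    have hd : ∀ y : E2, dist x y = ‖y - x‖ := fun y => by rw [dist_comm, dist_eq_norm]
    simp_rw [hd]
    exact integral_sub_right_eq_self (fun z : E2 => φ ‖z‖) x
  have e3 : ∫ z : E2, φ ‖z‖
      = 2 • ((volume (Metric.ball (0:E2) 1)).toReal •
          ∫ t in Set.Ioi (0:ℝ), t ^ (2 - 1 : ℕ) • φ t) := by
    have := MeasureTheory.integral_fun_norm_addHaar (volume : Measure E2) φ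
    rwa [finrank_euclideanSpace_fin] at this
  have e4 : ∫ t in Set.Ioi (0:ℝ), t ^ (2 - 1 : ℕ) • φ t = ∫ t in Set.Ioo a b, t ^ (q+1) := by
    have hptw : (fun t : ℝ => t ^ (2 - 1 : ℕ) • φ t)
        = (Set.Ioo a b).indicator (fun t => t * t ^ q) := by
      funext t
      by_cases h : t ∈ Set.Ioo a b
      · rw [Set.indicator_of_mem h, hφ, Set.indicator_of_mem h]
        simp
      · rw [Set.indicator_of_notMem h, hφ, Set.indicator_of_notMem h]
        simp
    have hsub : Set.Ioo a b ∩ Set.Ioi 0 = Set.Ioo a b :=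
      Set.inter_eq_self_of_subset_left (fun t ht => lt_trans ha ht.1)
    rw [hptw, integral_indicator measurableSet_Ioo, Measure.restrict_restrict measurableSet_Ioo,
      hsub]
    refine setIntegral_congr_fun measurableSet_Ioo (fun t ht => ?_)
    rw [Real.rpow_add (ha.trans ht.1), Real.rpow_one]
    ring
  rw [e1, e2, e3, e4]
  rw [nsmul_eq_mul, smul_eq_mul]
  push_cast
  ring

lemma Ioo_rpow_int_le {a b r : ℝ} (ha : 0 < a) (hr : r < -1) :
    ∫ t in Set.Ioo a b, t ^ r ≤ a ^ (r+1) / (-(r+1)) := by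
  rcases le_or_gt b a with hab | hab
  · rw [Set.Ioo_eq_empty (fun h => absurd hab (not_le.mpr h)), Measure.restrict_empty,
      integral_zero_measure]
    have h1 : (0:ℝ) < -(r+1) := by linarith
    positivity
  · have hb : 0 < b := ha.trans hab
    rw [← MeasureTheory.integral_Ioc_eq_integral_Ioo, ← intervalIntegral.integral_of_le hab.le,
      integral_rpow (Or.inr ⟨by linarith, Set.notMem_uIcc_of_lt ha hb⟩)]
    have h1 : (0:ℝ) < -(r+1) := by linarith
    have heq : (b ^ (r+1) - a ^ (r+1))/(r+1) = (a ^ (r+1) - b ^ (r+1))/(-(r+1)) := by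
      rw [div_eq_div_iff (by linarith : (r:ℝ)+1 ≠ 0) (by linarith : -((r:ℝ)+1) ≠ 0)]
      ring
    rw [heq]
    gcongr
    have : (0:ℝ) ≤ b ^ (r+1) := Real.rpow_nonneg hb.le _
    linarith

lemma Ioo_id_int {a b : ℝ} (hab : a ≤ b) :
    ∫ t in Set.Ioo a b, t ^ (1:ℝ) = (b^2 - a^2)/2 := by
  have : ∀ t ∈ Set.Ioo a b, t ^ (1:ℝ) = t := fun t _ => Real.rpow_one t
  rw [setIntegral_congr_fun measurableSet_Ioo this,
    ← MeasureTheory.integral_Ioc_eq_integral_Ioo, ← intervalIntegral.integral_of_le hab]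
  exact integral_id


lemma continuous_coord0 : Continuous fun y : E2 => y 0 := by
  have h : (fun y : E2 => y 0) = fun y => (Complex.orthonormalBasisOneI.repr.symm y).re := by
    funext y
    rw [← zC_eq]
    simp [zC]
  rw [h]
  exact Complex.continuous_re.comp (Complex.orthonormalBasisOneI.repr.symm).continuous

lemma continuous_coord1 : Continuous fun y : E2 => y 1 := by
  have h : (fun y : E2 => y 1) = fun y => (Complex.orthonormalBasisOneI.repr.symm y).im := by
    funext y
    rw [← zC_eq]
    simp [zC]
  rw [h]
  exact Complex.continuous_im.comp (Complex.orthonormalBasisOneI.repr.symm).continuous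

lemma measurable_polarAngle : Measurable polarAngle := by
  have h : polarAngle = fun y => Complex.arg (Complex.orthonormalBasisOneI.repr.symm y) := by
    funext y
    rw [polarAngle_eq, zC_eq]
  rw [h]
  exact Complex.measurable_arg.comp
    (Complex.orthonormalBasisOneI.repr.symm).continuous.measurable

lemma integrableOn_bdd {f : E2 → ℝ} {s : Set E2} (hs : MeasurableSet s) {x0 : E2} {R : ℝ}
    (hsub : s ⊆ Metric.ball x0 R) (hf : AEStronglyMeasurable f volume) {c : ℝ}
    (hc : ∀ y ∈ s, |f y| ≤ c) : IntegrableOn f s := by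
  apply Measure.integrableOn_of_bounded (M := c)
  · exact ((measure_mono hsub).trans_lt measure_ball_lt_top).ne
  · exact hf
  · rw [ae_restrict_iff' hs]
    exact ae_of_all _ (fun y hy => by rw [Real.norm_eq_abs]; exact hc y hy)

end TruncAux

open TruncAux

set_option maxHeartbeats 1000000 in
/-- Mid-range bound for the truncated angular velocity component applied to the
oscillatory function `g_N`. -/
theorem truncated_angular_bound (γ : ℝ) (hγ : γ ∈ Set.Ico (-1 : ℝ) 1)
    (R₀ R₁ : ℝ) (hR₀ : 0 < R₀) (hR : R₀ < R₁) :
    ∃ C > (0:ℝ), ∀ (gt α₀ : ℝ → ℝ), ContDiff ℝ (⊤ : ℕ∞) gt →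
      Function.support gt ⊆ Set.Ioo R₀ R₁ → ContDiff ℝ (⊤ : ℕ∞) α₀ →
      ∀ N : ℕ, 0 < N → ∀ x : E2,
        |Cgamma γ * ∫ y in {y : E2 | 1 / (N : ℝ) < dist x y ∧ dist x y < 3 * R₁},
            angularKernel γ x y * planeFun gt α₀ N y| ≤
          C * (⨆ z, |gt z|) * (N : ℝ) ^ γ := by
  obtain ⟨hγl, hγr⟩ := hγ
  have hR₁ : 0 < R₁ := hR₀.trans hR
  by_cases hγm1 : γ = -1
  · -- degenerate case : the constant C(γ) vanishes
    refine ⟨1, one_pos, ?_⟩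
    intro gt α₀ _ _ _ N hN x
    have hC0 : Cgamma γ = 0 := by
      subst hγm1
      unfold Cgamma
      norm_num
    rw [hC0, zero_mul, abs_zero]
    have hM : 0 ≤ ⨆ z, |gt z| := Real.iSup_nonneg (fun z => abs_nonneg _)
    positivity
  -- main case
  have hγl' : -1 < γ := lt_of_le_of_ne hγl (Ne.symm hγm1)
  have hγpos : 0 < 1 + γ := by linarith
  have hγp3 : 0 < 3 + γ := by linarith
  have hγp2 : 0 ≤ 2 + γ := by linarith
  have hπ : 0 < π := Real.pi_pos
  have hπ4 : π ≤ 4 := by nlinarith [Real.pi_le_four]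
  set c₀ : ℝ := (volume (Metric.ball (0:E2) 1)).toReal with hc₀_def
  have hc₀0 : 0 ≤ c₀ := ENNReal.toReal_nonneg
  set B₁ : ℝ := 1 + π * R₁ with hB₁_def
  have hB₁1 : 1 ≤ B₁ := by nlinarith
  have hB₁0 : 0 < B₁ := by linarith
  set K₁ : ℝ := 1 + 4 * B₁ ^ 6 with hK₁_def
  have hK₁0 : 0 < K₁ := by positivity
  set D : ℝ := 144 * c₀ * R₁^2 + π * R₁ * K₁ * c₀ / (1+γ) + B₁^2 * c₀
      + 9 * π * c₀ * R₁^2 * R₁ ^ (-(2+γ)) + 1 with hD_def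
  have hD0 : 0 < D := by positivity
  refine ⟨1 + |Cgamma γ| * D, by positivity, ?_⟩
  intro gt α₀ hgt hsupp hα N hN x
  set ν : ℝ := (N : ℝ) with hν_def
  have hν0 : 0 < ν := by exact_mod_cast Nat.cast_pos.mpr hN
  have hν1 : 1 ≤ ν := by exact_mod_cast Nat.one_le_cast.mpr hN
  have hinv0 : 0 < 1 / ν := by positivity
  have hνγ0 : 0 < ν ^ γ := Real.rpow_pos_of_pos hν0 γ
  -- sup bound for gt
  set M : ℝ := ⨆ z, |gt z| with hM_def
  have hbdd : BddAbove (Set.range fun z => |gt z|) := by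
    have hcomp : IsCompact ((fun z => |gt z|) '' Set.Icc R₀ R₁) :=
      isCompact_Icc.image hgt.continuous.abs
    apply BddAbove.mono ?_ (hcomp.bddAbove.insert 0)
    rintro _ ⟨z, rfl⟩
    by_cases hz : z ∈ Set.Icc R₀ R₁
    · exact Set.mem_insert_of_mem _ ⟨z, hz, rfl⟩
    · have hz0 : gt z = 0 := by
        by_contra h
        exact hz ⟨(hsupp h).1.le, (hsupp h).2.le⟩
      refine Set.mem_insert_iff.mpr (Or.inl ?_)
      show |gt z| = 0
      rw [hz0, abs_zero]
  have hMle : ∀ r, |gt r| ≤ M := fun r => le_ciSup hbdd r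
  have hM0 : 0 ≤ M := (abs_nonneg _).trans (hMle 0)
  set g : E2 → ℝ := planeFun gt α₀ N with hg_def
  have hgle : ∀ y, |g y| ≤ M := by
    intro y
    rw [hg_def]
    unfold planeFun
    rw [abs_mul]
    calc |gt ‖y‖| * |Real.sin ((N:ℝ) * polarAngle y + N * α₀ ‖y‖)| ≤ M * 1 := by
          apply mul_le_mul (hMle _) (abs_le.mpr ⟨Real.neg_one_le_sin _, Real.sin_le_one _⟩)
            (abs_nonneg _) hM0
      _ = M := mul_one M
  have hgmeas : Measurable g := by
    rw [hg_def]
    unfold planeFun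
    exact ((hgt.continuous.comp continuous_norm).measurable).mul
      (Real.continuous_sin.measurable.comp
        ((measurable_polarAngle.const_mul _).add
          (((hα.continuous.comp continuous_norm).measurable).const_mul _)))
  set A : Set E2 := {y : E2 | 1 / (N : ℝ) < dist x y ∧ dist x y < 3 * R₁} with hA_def
  have hAmeas : MeasurableSet A := measurableSet_shell x _ _
  have hAsub : A ⊆ Metric.ball x (3 * R₁) := fun y hy => Metric.mem_ball'.mpr hy.2
  set F : E2 → ℝ := angularKernel γ x with hF_def
  -- the "trivial" common bound
  suffices hmain : |∫ y in A, F y * g y| ≤ D * (M * ν ^ γ) by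
    rw [abs_mul]
    calc |Cgamma γ| * |∫ y in A, F y * g y|
        ≤ |Cgamma γ| * (D * (M * ν ^ γ)) :=
          mul_le_mul_of_nonneg_left hmain (abs_nonneg _)
      _ ≤ (1 + |Cgamma γ| * D) * M * ν ^ γ := by
          have h1 : 0 ≤ M * ν ^ γ := mul_nonneg hM0 hνγ0.le
          nlinarith [abs_nonneg (Cgamma γ)]
  by_cases hx0 : x = 0
  · -- kernel vanishes
    have hFz : ∀ y, F y = 0 := by
      intro y
      rw [hF_def, hx0]
      unfold angularKernel
      have h0 : (0 : E2) 0 = 0 := rfl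
      have h1 : (0 : E2) 1 = 0 := rfl
      rw [h0, h1]
      simp
    have : ∀ y, F y * g y = 0 := fun y => by rw [hFz y, zero_mul]
    calc |∫ y in A, F y * g y| = |∫ _y in A, (0:ℝ)| := by simp_rw [this]
      _ = 0 := by simp
      _ ≤ D * (M * ν ^ γ) := by positivity
  -- now x ≠ 0 ; kernel bounds available
  have hFmeas : Measurable F := by
    rw [hF_def]
    unfold angularKernel
    apply Measurable.div
    · exact ((continuous_const.mul (continuous_const.sub continuous_coord0)).add
        (continuous_const.mul (continuous_const.sub continuous_coord1))).measurable
    · exact (continuous_const.mul ((continuous_const.sub continuous_id).norm.rpow_const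
        (fun y => Or.inr (by linarith)))).measurable
  have hFA : ∀ y ∈ A, |F y| ≤ ν ^ (2+γ) := by
    intro y hy
    have h := kernel_abs_le' hγp3 hγp2 hx0 hinv0 hy.1.le
    rwa [one_div, Real.inv_rpow hν0.le, Real.rpow_neg hν0.le, inv_inv] at h
  have hFGA : ∀ y ∈ A, |F y * g y| ≤ ν ^ (2+γ) * M := by
    intro y hy
    rw [abs_mul]
    exact mul_le_mul (hFA y hy) (hgle y) (abs_nonneg _) (by positivity)
  have hAfin : volume A < ⊤ := (measure_mono hAsub).trans_lt measure_ball_lt_top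
  have hAvol : (volume A).toReal ≤ 9 * R₁^2 * c₀ := by
    have h1 : (volume A).toReal ≤ (volume (Metric.ball x (3*R₁))).toReal :=
      ENNReal.toReal_mono measure_ball_lt_top.ne (measure_mono hAsub)
    have h2 : volume (Metric.ball x (3*R₁))
        = ENNReal.ofReal ((3*R₁)^2) * volume (Metric.ball (0:E2) 1) := by
      have := Measure.addHaar_ball (volume : Measure E2) x (by positivity : (0:ℝ) ≤ 3*R₁)
      rwa [finrank_euclideanSpace_fin] at this
    rw [h2, ENNReal.toReal_mul, ENNReal.toReal_ofReal (by positivity)] at h1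
    calc (volume A).toReal ≤ (3*R₁)^2 * c₀ := h1
      _ = 9 * R₁^2 * c₀ := by ring
  rcases le_or_gt (N:ℝ) 4 with hsmall | hbig
  · -- small N : crude bound
    have hb := norm_setIntegral_le_of_norm_le_const (μ := volume) (s := A)
      (C := ν ^ (2+γ) * M) hAfin
      (fun y hy => by rw [Real.norm_eq_abs]; exact hFGA y hy)
    rw [Real.norm_eq_abs] at hb
    have hν2 : ν ^ ((2:ℝ)+γ) = ν^2 * ν^γ := by
      rw [Real.rpow_add hν0]
      congr 1
      rw [show (2:ℝ) = ((2:ℕ):ℝ) by norm_num, Real.rpow_natCast]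
    calc |∫ y in A, F y * g y| ≤ ν ^ (2+γ) * M * (volume A).toReal := hb
      _ ≤ ν ^ (2+γ) * M * (9 * R₁^2 * c₀) := by
          apply mul_le_mul_of_nonneg_left hAvol (by positivity)
      _ = (ν^2 * (9 * R₁^2 * c₀)) * (M * ν^γ) := by rw [hν2]; ring
      _ ≤ (144 * c₀ * R₁^2) * (M * ν^γ) := by
          have hν2' : ν^2 ≤ 16 := by nlinarith
          have h9 : (0:ℝ) ≤ 9 * R₁^2 * c₀ := by positivity
          have h16 : ν^2 * (9 * R₁^2 * c₀) ≤ 144 * c₀ * R₁^2 := by nlinarith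
          apply mul_le_mul_of_nonneg_right h16 (by positivity)
      _ ≤ D * (M * ν^γ) := by
          apply mul_le_mul_of_nonneg_right ?_ (by positivity)
          rw [hD_def]
          have h3 : 0 ≤ π * R₁ * K₁ * c₀ / (1+γ) := by positivity
          have h4 : 0 ≤ B₁^2 * c₀ := by positivity
          have h5 : 0 ≤ 9 * π * c₀ * R₁^2 * R₁ ^ (-(2+γ)) := by positivity
          linarith
  · -- large N : rotation trick
    have hν4 : (4:ℝ) ≤ ν := hbig.le
    have hπR₁ : 0 < π * R₁ := mul_pos hπ hR₁
    set θ : ℝ := π / ν with hθ_def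
    have hθ0 : 0 < θ := div_pos hπ hν0
    set w := rotE θ with hw_def
    set ε : ℝ := π * R₁ / ν with hε_def
    have hε0 : 0 < ε := div_pos hπR₁ hν0
    have hεnn : 0 ≤ ε := hε0.le
    have hεR₁ : ε ≤ R₁ := by
      rw [hε_def, div_le_iff₀ hν0]
      have h1 : π * R₁ ≤ ν * R₁ := mul_le_mul_of_nonneg_right (hπ4.trans hν4) hR₁.le
      linarith only [h1]
    set Bs : Set E2 := (⇑w) ⁻¹' A with hBs_def
    have hBmeas : MeasurableSet Bs := hAmeas.preimage w.toHomeomorph.measurable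
    have hBsub : Bs ⊆ Metric.ball (0:E2) (‖x‖ + 3*R₁) := by
      intro y hy
      have h1 : dist x (w y) < 3*R₁ := hy.2
      rw [Metric.mem_ball, dist_zero_right, ← w.norm_map y]
      calc ‖w y‖ = dist (w y) 0 := (dist_zero_right _).symm
        _ ≤ dist (w y) x + dist x 0 := dist_triangle _ _ _
        _ = dist x (w y) + ‖x‖ := by rw [dist_comm, dist_zero_right]
        _ < ‖x‖ + 3*R₁ := by linarith only [h1]
    have hgt0 : gt 0 = 0 := by
      by_contra h
      have h2 := (hsupp h).1
      linarith only [h2, hR₀]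
    have hg_rot : ∀ y, g (w y) = - g y := by
      intro y
      rw [hg_def, hw_def, hθ_def]
      exact planeFun_rot gt α₀ hgt0 N hN y
    have hcov : ∫ y in Bs, F (w y) * g (w y) = ∫ y in A, F y * g y :=
      (LinearIsometryEquiv.measurePreserving w).setIntegral_preimage_emb
        (w.toHomeomorph.measurableEmbedding) (fun z => F z * g z) A
    have hIB : ∫ y in Bs, F (w y) * g y = - ∫ y in A, F y * g y := by
      rw [← hcov, ← integral_neg]
      apply setIntegral_congr_fun hBmeas
      intro y _
      show F (w y) * g y = -(F (w y) * g (w y))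
      rw [hg_rot y]
      ring
    have hFB' : ∀ y ∈ Bs, |F (w y) * g y| ≤ ν ^ (2+γ) * M := by
      intro y hy
      rw [abs_mul]
      have hwy : w y ∈ A := hy
      have h := kernel_abs_le' hγp3 hγp2 hx0 hinv0 hwy.1.le
      rw [one_div, Real.inv_rpow hν0.le, Real.rpow_neg hν0.le, inv_inv] at h
      exact mul_le_mul h (hgle y) (abs_nonneg _) (Real.rpow_nonneg hν0.le _)
    have intA : IntegrableOn (fun y => F y * g y) A :=
      integrableOn_bdd hAmeas hAsub (hFmeas.mul hgmeas).aestronglyMeasurable hFGA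
    have intB : IntegrableOn (fun y => F (w y) * g y) Bs :=
      integrableOn_bdd hBmeas hBsub
        (((hFmeas.comp w.toHomeomorph.measurable).mul hgmeas).aestronglyMeasurable) hFB'
    set Tin : Set E2 := Metric.closedBall x ((1 + π*R₁)/ν) with hTin_def
    set Tout : Set E2 := {y : E2 | 3*R₁ - 2*ε < dist x y ∧ dist x y < 3*R₁ + ε} with hTout_def
    have hToutmeas : MeasurableSet Tout := measurableSet_shell x (3*R₁ - 2*ε) (3*R₁ + ε)
    set T1 : E2 → ℝ := fun y => K₁ * ε * A.indicator (fun z => dist x z ^ (-(3+γ))) y with hT1_def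
    set T2 : E2 → ℝ := fun y => ν^((2:ℝ)+γ) * Tin.indicator (fun _ => (1:ℝ)) y with hT2_def
    set T3 : E2 → ℝ := fun y => R₁ ^ (-(2+γ)) * Tout.indicator (fun _ => (1:ℝ)) y with hT3_def
    have hK₁nn : 0 ≤ K₁ := hK₁0.le
    have hT1nn : ∀ y, 0 ≤ T1 y := fun y => mul_nonneg (mul_nonneg hK₁nn hεnn)
      (Set.indicator_nonneg (fun z _ => Real.rpow_nonneg dist_nonneg _) y)
    have hT2nn : ∀ y, 0 ≤ T2 y := fun y => mul_nonneg (Real.rpow_nonneg hν0.le _)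
      (Set.indicator_nonneg (fun z _ => zero_le_one) y)
    have hT3nn : ∀ y, 0 ≤ T3 y := fun y => mul_nonneg (Real.rpow_nonneg hR₁.le _)
      (Set.indicator_nonneg (fun z _ => zero_le_one) y)
    have hdistmeas : Measurable fun z : E2 => dist x z ^ (-(3+γ)) := by
      have he : (fun z : E2 => dist x z ^ (-(3+γ))) = fun z => (dist x z ^ ((3:ℝ)+γ))⁻¹ := by
        funext z
        rw [Real.rpow_neg dist_nonneg]
      rw [he]
      exact (((continuous_const.dist continuous_id).rpow_const
        (fun z => Or.inr (by linarith only [hγp3]))).measurable).inv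
    have intT1 : Integrable T1 := by
      rw [hT1_def]
      apply Integrable.const_mul
      rw [integrable_indicator_iff hAmeas]
      apply integrableOn_bdd hAmeas hAsub hdistmeas.aestronglyMeasurable (c := ν ^ ((3:ℝ)+γ))
      intro y hy
      have h1 : dist x y ^ (-(3+γ)) ≤ (1/ν) ^ (-(3+γ)) :=
        Real.rpow_le_rpow_of_nonpos hinv0 hy.1.le (by linarith only [hγp3])
      rw [abs_of_nonneg (Real.rpow_nonneg dist_nonneg _)]
      rwa [one_div, Real.inv_rpow hν0.le, Real.rpow_neg hν0.le, inv_inv] at h1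
    have intT2 : Integrable T2 := by
      rw [hT2_def]
      apply Integrable.const_mul
      rw [integrable_indicator_iff measurableSet_closedBall]
      exact integrableOn_const measure_closedBall_lt_top.ne
    have intT3 : Integrable T3 := by
      rw [hT3_def]
      apply Integrable.const_mul
      rw [integrable_indicator_iff hToutmeas]
      refine integrableOn_const (ne_of_lt ?_)
      exact (measure_mono (fun y hy => Metric.mem_ball'.mpr hy.2)).trans_lt measure_ball_lt_top
    have hsplit : (2:ℝ) * ∫ y in A, F y * g y
        = ∫ y, (A.indicator (fun z => F z * g z) y - Bs.indicator (fun z => F (w z) * g z) y) := by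
      rw [integral_sub ((integrable_indicator_iff hAmeas).mpr intA)
        ((integrable_indicator_iff hBmeas).mpr intB),
        integral_indicator hAmeas, integral_indicator hBmeas, hIB]
      ring
    have hU : ∀ y, ‖A.indicator (fun z => F z * g z) y - Bs.indicator (fun z => F (w z) * g z) y‖
        ≤ (T1 y + T2 y + T3 y) * M := by
      intro y
      rw [Real.norm_eq_abs]
      have hTnn : 0 ≤ T1 y + T2 y + T3 y :=
        add_nonneg (add_nonneg (hT1nn y) (hT2nn y)) (hT3nn y)
      by_cases hgy : g y = 0
      · have e1 : A.indicator (fun z => F z * g z) y = 0 := by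
          by_cases h : y ∈ A
          · rw [Set.indicator_of_mem h, hgy, mul_zero]
          · rw [Set.indicator_of_notMem h]
        have e2 : Bs.indicator (fun z => F (w z) * g z) y = 0 := by
          by_cases h : y ∈ Bs
          · rw [Set.indicator_of_mem h, hgy, mul_zero]
          · rw [Set.indicator_of_notMem h]
        rw [e1, e2, sub_zero, abs_zero]
        exact mul_nonneg hTnn hM0
      have hyR : ‖y‖ < R₁ := by
        have hgt_ne : gt ‖y‖ ≠ 0 := by
          intro h
          apply hgy
          rw [hg_def]
          unfold planeFun
          rw [h, zero_mul]
        exact (hsupp hgt_ne).2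
      have hdw : dist y (w y) ≤ ε := by
        have h1 := dist_rotE_le θ y
        rw [abs_of_pos hθ0] at h1
        calc dist y (w y) ≤ θ * ‖y‖ := h1
          _ ≤ θ * R₁ := mul_le_mul_of_nonneg_left hyR.le hθ0.le
          _ = ε := by rw [hθ_def, hε_def]; ring
      have hdε : |dist x y - dist x (w y)| ≤ ε := by
        refine le_trans ?_ hdw
        rw [dist_comm x y, dist_comm x (w y)]
        exact abs_dist_sub_le y (w y) x
      have hdεl := (abs_le.mp hdε).1
      have hdεr := (abs_le.mp hdε).2
      by_cases hA' : y ∈ A <;> by_cases hB' : y ∈ Bs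
      · -- both in : difference estimate
        rw [Set.indicator_of_mem hA', Set.indicator_of_mem hB', ← sub_mul, abs_mul]
        have hA1 : 1/ν < dist x y := hA'.1
        have hwA : w y ∈ A := hB'
        have hs0 : 0 < dist x y := hinv0.trans hA1
        have hs'0 : 0 < dist x (w y) := hinv0.trans hwA.1
        set m : ℝ := min (dist x y) (dist x (w y)) with hm_def
        have hm0 : 0 < m := lt_min hs0 hs'0
        have hminv : 1/ν < m := lt_min hA1 hwA.1
        have hkd := kernel_diff_le hγp3 hx0 y (w y) hm0 (min_le_left _ _) (min_le_right _ _)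
        have hεs : ε ≤ π * R₁ * dist x y := by
          have h1 : 1 < dist x y * ν := (div_lt_iff₀ hν0).mp hA1
          have h2 : π * R₁ * 1 ≤ π * R₁ * (dist x y * ν) :=
            mul_le_mul_of_nonneg_left h1.le hπR₁.le
          rw [hε_def, div_le_iff₀ hν0]
          linarith only [h2]
        have hεm : ε ≤ π * R₁ * m := by
          have h1 : 1 < m * ν := (div_lt_iff₀ hν0).mp hminv
          have h2 : π * R₁ * 1 ≤ π * R₁ * (m * ν) :=
            mul_le_mul_of_nonneg_left h1.le hπR₁.le
          rw [hε_def, div_le_iff₀ hν0]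
          linarith only [h2]
        have hsB : dist x (w y) ≤ B₁ * dist x y := by
          rw [hB₁_def]
          calc dist x (w y) ≤ dist x y + ε := by linarith only [hdεl]
            _ ≤ dist x y + π * R₁ * dist x y := by linarith only [hεs]
            _ = (1 + π*R₁) * dist x y := by ring
        have hmB : dist x y / B₁ ≤ m := by
          have h1 : dist x y ≤ m + ε := by
            rcases min_cases (dist x y) (dist x (w y)) with ⟨he, _⟩ | ⟨he, _⟩
            · rw [hm_def, he]; linarith only [hεnn]
            · rw [hm_def, he]; linarith only [hdεr]
          rw [div_le_iff₀ hB₁0, hB₁_def]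
          calc dist x y ≤ m + ε := h1
            _ ≤ m + π * R₁ * m := by linarith only [hεm]
            _ = m * (1 + π*R₁) := by ring
        have hmr : m ^ (-(4+γ)) ≤ B₁^5 * dist x y ^ (-(4+γ)) := by
          have h1 : m ^ (-(4+γ)) ≤ (dist x y / B₁) ^ (-(4+γ)) :=
            Real.rpow_le_rpow_of_nonpos (div_pos hs0 hB₁0) hmB (by linarith only [hγp3])
          have h3 : (dist x y / B₁) ^ (-(4+γ)) * B₁ ^ (-(4+γ)) = dist x y ^ (-(4+γ)) := by
            rw [← Real.mul_rpow (div_pos hs0 hB₁0).le hB₁0.le, div_mul_cancel₀ _ hB₁0.ne']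
          have hBB : B₁ ^ (-(4+γ)) * B₁ ^ ((4:ℝ)+γ) = 1 := by
            rw [← Real.rpow_add hB₁0, show (-(4+γ) + ((4:ℝ)+γ) : ℝ) = 0 by ring, Real.rpow_zero]
          have h2 : (dist x y / B₁) ^ (-(4+γ)) = dist x y ^ (-(4+γ)) * B₁ ^ ((4:ℝ)+γ) := by
            calc (dist x y / B₁) ^ (-(4+γ))
                = (dist x y / B₁) ^ (-(4+γ)) * (B₁ ^ (-(4+γ)) * B₁ ^ ((4:ℝ)+γ)) := by
                  rw [hBB, mul_one]
              _ = ((dist x y / B₁) ^ (-(4+γ)) * B₁ ^ (-(4+γ))) * B₁ ^ ((4:ℝ)+γ) := by ring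
              _ = dist x y ^ (-(4+γ)) * B₁ ^ ((4:ℝ)+γ) := by rw [h3]
          have h4 : B₁ ^ ((4:ℝ)+γ) ≤ B₁ ^ (5:ℝ) :=
            Real.rpow_le_rpow_of_exponent_le hB₁1 (by linarith only [hγr])
          have h5 : B₁ ^ (5:ℝ) = B₁^(5:ℕ) := by
            rw [show (5:ℝ) = ((5:ℕ):ℝ) by norm_num, Real.rpow_natCast]
          calc m ^ (-(4+γ)) ≤ dist x y ^ (-(4+γ)) * B₁ ^ ((4:ℝ)+γ) := h1.trans_eq h2
            _ ≤ dist x y ^ (-(4+γ)) * B₁ ^ (5:ℝ) :=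
                mul_le_mul_of_nonneg_left h4 (Real.rpow_nonneg dist_nonneg _)
            _ = B₁^5 * dist x y ^ (-(4+γ)) := by rw [h5]; ring
        have hsplits : dist x y ^ (-(4+γ)) * dist x y = dist x y ^ (-(3+γ)) := by
          nth_rewrite 2 [← Real.rpow_one (dist x y)]
          rw [← Real.rpow_add hs0]
          rw [show (-(4+γ)+1 : ℝ) = -(3+γ) by ring]
        have hFF : |F y - F (w y)| ≤ K₁ * ε * dist x y ^ (-(3+γ)) := by
          have hsnn : (0:ℝ) ≤ dist x y ^ (-(3+γ)) := Real.rpow_nonneg dist_nonneg _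
          have hs4nn : (0:ℝ) ≤ dist x y ^ (-(4+γ)) := Real.rpow_nonneg dist_nonneg _
          have term1 : dist x y ^ (-(3+γ)) * dist y (w y) ≤ dist x y ^ (-(3+γ)) * ε :=
            mul_le_mul_of_nonneg_left hdw hsnn
          have h12 : (3+γ) * dist x (w y) ≤ 4*(B₁*dist x y) :=
            mul_le_mul (by linarith only [hγr]) hsB dist_nonneg (by norm_num)
          have hBsnn : (0:ℝ) ≤ 4*(B₁*dist x y) := by
            have h := mul_nonneg hB₁0.le (dist_nonneg (x := x) (y := y))
            linarith only [h]
          have h123 : (3+γ) * dist x (w y) * m ^ (-(4+γ))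
              ≤ 4*(B₁*dist x y) * (B₁^5 * dist x y ^ (-(4+γ))) :=
            mul_le_mul h12 hmr (Real.rpow_nonneg hm0.le _) hBsnn
          have hB5nn : (0:ℝ) ≤ 4*(B₁*dist x y) * (B₁^5 * dist x y ^ (-(4+γ))) :=
            mul_nonneg hBsnn (mul_nonneg (pow_nonneg hB₁0.le 5) hs4nn)
          have term2 : (3+γ) * dist x (w y) * m ^ (-(4+γ)) * dist y (w y)
              ≤ 4*(B₁*dist x y) * (B₁^5 * dist x y ^ (-(4+γ))) * ε :=
            mul_le_mul h123 hdw dist_nonneg hB5nn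
          calc |F y - F (w y)| ≤ dist x y ^ (-(3+γ)) * dist y (w y)
              + (3+γ) * dist x (w y) * m ^ (-(4+γ)) * dist y (w y) := hkd
            _ ≤ dist x y ^ (-(3+γ)) * ε
              + 4*(B₁*dist x y) * (B₁^5 * dist x y ^ (-(4+γ))) * ε := add_le_add term1 term2
            _ = ε * dist x y ^ (-(3+γ))
              + 4*B₁^6 * ε * (dist x y ^ (-(4+γ)) * dist x y) := by ring
            _ = (1 + 4*B₁^6) * ε * dist x y ^ (-(3+γ)) := by rw [hsplits]; ring
            _ = K₁ * ε * dist x y ^ (-(3+γ)) := by rw [hK₁_def]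
        calc |F y - F (w y)| * |g y| ≤ (K₁ * ε * dist x y ^ (-(3+γ))) * M :=
              mul_le_mul hFF (hgle y) (abs_nonneg _)
                (mul_nonneg (mul_nonneg hK₁nn hεnn) (Real.rpow_nonneg dist_nonneg _))
          _ = T1 y * M := by
              rw [hT1_def]
              simp only
              rw [Set.indicator_of_mem hA']
          _ ≤ (T1 y + T2 y + T3 y) * M :=
              mul_le_mul_of_nonneg_right (by linarith only [hT2nn y, hT3nn y]) hM0
      · -- in A, not in B
        rw [Set.indicator_of_mem hA', Set.indicator_of_notMem hB', sub_zero, abs_mul]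
        have hnB : ¬ (1/ν < dist x (w y) ∧ dist x (w y) < 3*R₁) := hB'
        rw [not_and_or, not_lt, not_lt] at hnB
        rcases hnB with hle | hge
        · have hyT : y ∈ Tin := by
            rw [hTin_def, Metric.mem_closedBall, dist_comm]
            have h1 : dist x y ≤ 1/ν + ε := by linarith only [hdεr, hle]
            rw [hε_def] at h1
            calc dist x y ≤ 1/ν + π*R₁/ν := h1
              _ = (1+π*R₁)/ν := by ring
          have hFb : |F y| ≤ ν^((2:ℝ)+γ) := hFA y hA'
          calc |F y| * |g y| ≤ ν^((2:ℝ)+γ) * M :=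
                mul_le_mul hFb (hgle y) (abs_nonneg _) (Real.rpow_nonneg hν0.le _)
            _ = T2 y * M := by
                rw [hT2_def]
                simp only
                rw [Set.indicator_of_mem hyT, mul_one]
            _ ≤ (T1 y + T2 y + T3 y) * M :=
                mul_le_mul_of_nonneg_right (by linarith only [hT1nn y, hT3nn y]) hM0
        · have hyT : y ∈ Tout := by
            refine ⟨?_, ?_⟩
            · linarith only [hdεl, hge, hε0]
            · linarith only [hA'.2, hε0]
          have hsR : R₁ ≤ dist x y := by linarith only [hdεl, hge, hεR₁, hR₁]
          have hFb : |F y| ≤ R₁ ^ (-(2+γ)) := kernel_abs_le' hγp3 hγp2 hx0 hR₁ hsR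
          calc |F y| * |g y| ≤ R₁ ^ (-(2+γ)) * M :=
                mul_le_mul hFb (hgle y) (abs_nonneg _) (Real.rpow_nonneg hR₁.le _)
            _ = T3 y * M := by
                rw [hT3_def]
                simp only
                rw [Set.indicator_of_mem hyT, mul_one]
            _ ≤ (T1 y + T2 y + T3 y) * M :=
                mul_le_mul_of_nonneg_right (by linarith only [hT1nn y, hT2nn y]) hM0
      · -- not in A, in B
        rw [Set.indicator_of_notMem hA', Set.indicator_of_mem hB', zero_sub, abs_neg, abs_mul]
        have hwA : w y ∈ A := hB'
        have hnA : ¬ (1/ν < dist x y ∧ dist x y < 3*R₁) := hA'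
        rw [not_and_or, not_lt, not_lt] at hnA
        rcases hnA with hle | hge
        · have hyT : y ∈ Tin := by
            rw [hTin_def, Metric.mem_closedBall, dist_comm]
            calc dist x y ≤ 1/ν := hle
              _ ≤ (1+π*R₁)/ν := by
                  gcongr <;> linarith only [hπR₁]
          have hFb : |F (w y)| ≤ ν^((2:ℝ)+γ) := by
            have h := kernel_abs_le' hγp3 hγp2 hx0 hinv0 hwA.1.le
            rwa [one_div, Real.inv_rpow hν0.le, Real.rpow_neg hν0.le, inv_inv] at h
          calc |F (w y)| * |g y| ≤ ν^((2:ℝ)+γ) * M :=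
                mul_le_mul hFb (hgle y) (abs_nonneg _) (Real.rpow_nonneg hν0.le _)
            _ = T2 y * M := by
                rw [hT2_def]
                simp only
                rw [Set.indicator_of_mem hyT, mul_one]
            _ ≤ (T1 y + T2 y + T3 y) * M :=
                mul_le_mul_of_nonneg_right (by linarith only [hT1nn y, hT3nn y]) hM0
        · have hyT : y ∈ Tout := by
            refine ⟨?_, ?_⟩
            · linarith only [hge, hε0]
            · linarith only [hdεr, hwA.2]
          have hs'R : R₁ ≤ dist x (w y) := by linarith only [hdεr, hge, hεR₁, hR₁]
          have hFb : |F (w y)| ≤ R₁ ^ (-(2+γ)) := kernel_abs_le' hγp3 hγp2 hx0 hR₁ hs'R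
          calc |F (w y)| * |g y| ≤ R₁ ^ (-(2+γ)) * M :=
                mul_le_mul hFb (hgle y) (abs_nonneg _) (Real.rpow_nonneg hR₁.le _)
            _ = T3 y * M := by
                rw [hT3_def]
                simp only
                rw [Set.indicator_of_mem hyT, mul_one]
            _ ≤ (T1 y + T2 y + T3 y) * M :=
                mul_le_mul_of_nonneg_right (by linarith only [hT1nn y, hT2nn y]) hM0
      · rw [Set.indicator_of_notMem hA', Set.indicator_of_notMem hB', sub_zero, abs_zero]
        exact mul_nonneg hTnn hM0
    have hHint : Integrable fun y => (T1 y + T2 y + T3 y) * M :=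
      ((intT1.add intT2).add intT3).mul_const M
    have h2I : |(2:ℝ) * ∫ y in A, F y * g y| ≤ ∫ y, (T1 y + T2 y + T3 y) * M := by
      rw [hsplit, ← Real.norm_eq_abs]
      exact norm_integral_le_of_norm_le hHint (ae_of_all _ hU)
    have intT12 : Integrable (fun y => T1 y + T2 y) volume := intT1.add intT2
    have hHeq : ∫ y, (T1 y + T2 y + T3 y) * M
        = (K₁ * ε * (∫ y in A, dist x y ^ (-(3+γ)))
           + ν^((2:ℝ)+γ) * (volume Tin).toReal
           + R₁ ^ (-(2+γ)) * (volume Tout).toReal) * M := by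
      rw [integral_mul_const]
      congr 1
      rw [integral_add intT12 intT3, integral_add intT1 intT2]
      have e1 : ∫ y, T1 y = K₁ * ε * (∫ y in A, dist x y ^ (-(3+γ))) := by
        rw [hT1_def, integral_const_mul, integral_indicator hAmeas]
      have e2 : ∫ y, T2 y = ν^((2:ℝ)+γ) * (volume Tin).toReal := by
        rw [hT2_def, integral_const_mul, integral_indicator
          measurableSet_closedBall, setIntegral_const, smul_eq_mul, mul_one]
        rfl
      have e3 : ∫ y, T3 y = R₁ ^ (-(2+γ)) * (volume Tout).toReal := by
        rw [hT3_def, integral_const_mul, integral_indicator hToutmeas, setIntegral_const,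
          smul_eq_mul, mul_one]
        rfl
      rw [e1, e2, e3]
    have hJ1 : (∫ y in A, dist x y ^ (-(3+γ))) ≤ 2*c₀*(ν^((1:ℝ)+γ)/(1+γ)) := by
      rw [hA_def, radial_eq x (1/ν) (3*R₁) (-(3+γ)) hinv0]
      have h2 := Ioo_rpow_int_le (a := 1/ν) (b := 3*R₁) (r := -(3+γ)+1) hinv0
        (by linarith only [hγl'])
      rw [show (-(3+γ)+1+1 : ℝ) = -(1+γ) by ring] at h2
      rw [show (-(-((1:ℝ)+γ)) : ℝ) = 1+γ by ring] at h2
      have h3 : (1/ν) ^ (-((1:ℝ)+γ)) = ν ^ ((1:ℝ)+γ) := by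
        rw [one_div, Real.inv_rpow hν0.le, Real.rpow_neg hν0.le, inv_inv]
      rw [h3] at h2
      calc 2 * (volume (Metric.ball (0:E2) 1)).toReal * ∫ t in Set.Ioo (1/ν) (3*R₁), t ^ (-(3+γ)+1)
          ≤ 2 * (volume (Metric.ball (0:E2) 1)).toReal * (ν ^ ((1:ℝ)+γ)/(1+γ)) := by
            apply mul_le_mul_of_nonneg_left h2
            positivity
        _ = 2*c₀*(ν^((1:ℝ)+γ)/(1+γ)) := by rw [hc₀_def]
    have hJ1nn : 0 ≤ (∫ y in A, dist x y ^ (-(3+γ))) :=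
      setIntegral_nonneg hAmeas (fun y _ => Real.rpow_nonneg dist_nonneg _)
    have hTin_vol : (volume Tin).toReal = ((1+π*R₁)/ν)^2 * c₀ := by
      have h1 := Measure.addHaar_closedBall (volume : Measure E2) x
        (show (0:ℝ) ≤ (1+π*R₁)/ν from div_nonneg (by linarith only [hπR₁]) hν0.le)
      rw [finrank_euclideanSpace_fin] at h1
      rw [hTin_def, h1, ENNReal.toReal_mul, ENNReal.toReal_ofReal (sq_nonneg _), hc₀_def]
    have hTout_vol : (volume Tout).toReal ≤ 18 * c₀ * R₁ * ε := by
      have ha0 : 0 < 3*R₁ - 2*ε := by linarith only [hεR₁, hR₁]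
      have hab : 3*R₁ - 2*ε ≤ 3*R₁ + ε := by linarith only [hε0]
      have h0 : (volume Tout).toReal = ∫ _y in Tout, (1:ℝ) := by
        rw [setIntegral_const, smul_eq_mul, mul_one]
        rfl
      have h1 : ∫ _y in Tout, (1:ℝ) = ∫ y in Tout, dist x y ^ (0:ℝ) :=
        (setIntegral_congr_fun hToutmeas (fun y _ => Real.rpow_zero _)).symm
      rw [h0, h1, hTout_def, radial_eq x _ _ 0 ha0, zero_add, Ioo_id_int hab]
      rw [show ((3*R₁+ε)^2 - (3*R₁-2*ε)^2 : ℝ) = 18*R₁*ε - 3*ε^2 by ring]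
      rw [← hc₀_def]
      have hcc : 0 ≤ c₀ * ε^2 := mul_nonneg hc₀0 (sq_nonneg ε)
      have hexp : 2*c₀*((18*R₁*ε - 3*ε^2)/2) = 18*c₀*R₁*ε - 3*(c₀*ε^2) := by ring
      rw [hexp]
      linarith only [hcc]
    have hP0 : 0 ≤ M * ν^γ := mul_nonneg hM0 hνγ0.le
    have t1 : K₁ * ε * (∫ y in A, dist x y ^ (-(3+γ)))
        ≤ 2*(π*R₁*K₁*c₀/(1+γ)) * ν^γ := by
      calc K₁ * ε * (∫ y in A, dist x y ^ (-(3+γ)))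
          ≤ K₁ * ε * (2*c₀*(ν^((1:ℝ)+γ)/(1+γ))) :=
            mul_le_mul_of_nonneg_left hJ1 (mul_nonneg hK₁nn hεnn)
        _ = 2*(π*R₁*K₁*c₀/(1+γ)) * ν^γ := by
            rw [hε_def]
            have hsplitν : ν^((1:ℝ)+γ) = ν * ν^γ := by
              rw [Real.rpow_add hν0, Real.rpow_one]
            rw [hsplitν]
            field_simp
    have t2 : ν^((2:ℝ)+γ) * (volume Tin).toReal ≤ B₁^2*c₀ * ν^γ := by
      rw [hTin_vol]
      have hsplit2 : ν^((2:ℝ)+γ) = (ν*ν) * ν^γ := by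
        rw [show ((2:ℝ)+γ) = 1+(1+γ) by ring, Real.rpow_add hν0, Real.rpow_one,
          Real.rpow_add hν0, Real.rpow_one, ← mul_assoc]
      rw [hsplit2, hB₁_def]
      apply le_of_eq
      field_simp
    have t3 : R₁ ^ (-(2+γ)) * (volume Tout).toReal
        ≤ (18*π*c₀*R₁^2*R₁^(-(2+γ))) * ν^γ := by
      have hνinv : (1:ℝ)/ν ≤ ν^γ := by
        have h := Real.rpow_le_rpow_of_exponent_le hν1 hγl
        rwa [Real.rpow_neg_one, ← one_div] at h
      have hcnn : (0:ℝ) ≤ 18*π*c₀*R₁^2*R₁^(-(2+γ)) :=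
        mul_nonneg (mul_nonneg (mul_nonneg (by positivity) hc₀0) (sq_nonneg R₁))
          (Real.rpow_nonneg hR₁.le _)
      calc R₁ ^ (-(2+γ)) * (volume Tout).toReal
          ≤ R₁ ^ (-(2+γ)) * (18 * c₀ * R₁ * ε) :=
            mul_le_mul_of_nonneg_left hTout_vol (Real.rpow_nonneg hR₁.le _)
        _ = (18*π*c₀*R₁^2*R₁^(-(2+γ))) * (1/ν) := by rw [hε_def]; ring
        _ ≤ (18*π*c₀*R₁^2*R₁^(-(2+γ))) * ν^γ :=
            mul_le_mul_of_nonneg_left hνinv hcnn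
    have habs2 : |(2:ℝ) * ∫ y in A, F y * g y| = 2 * |∫ y in A, F y * g y| := by
      rw [abs_mul, abs_two]
    have hbig2 : 2 * |∫ y in A, F y * g y|
        ≤ (2*(π*R₁*K₁*c₀/(1+γ)) * ν^γ + B₁^2*c₀ * ν^γ + (18*π*c₀*R₁^2*R₁^(-(2+γ))) * ν^γ) * M := by
      rw [← habs2]
      refine h2I.trans ?_
      rw [hHeq]
      apply mul_le_mul_of_nonneg_right ?_ hM0
      exact add_le_add (add_le_add t1 t2) t3
    have hDineq : π*R₁*K₁*c₀/(1+γ) + B₁^2*c₀ + 9*π*c₀*R₁^2*R₁^(-(2+γ)) ≤ D := by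
      rw [hD_def]
      have h1 : (0:ℝ) ≤ 144 * c₀ * R₁^2 :=
        mul_nonneg (mul_nonneg (by norm_num) hc₀0) (sq_nonneg R₁)
      linarith only [h1]
    have hfinal : 2 * |∫ y in A, F y * g y| ≤ 2 * (D * (M * ν^γ)) := by
      refine hbig2.trans ?_
      have hexp : (2*(π*R₁*K₁*c₀/(1+γ)) * ν^γ + B₁^2*c₀ * ν^γ
            + (18*π*c₀*R₁^2*R₁^(-(2+γ))) * ν^γ) * M
          = (2*(π*R₁*K₁*c₀/(1+γ)) + B₁^2*c₀ + 18*π*c₀*R₁^2*R₁^(-(2+γ))) * (M * ν^γ) := by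
        ring
      rw [hexp, show (2 * (D * (M * ν^γ)) : ℝ) = (2*D) * (M * ν^γ) by ring]
      apply mul_le_mul_of_nonneg_right ?_ hP0
      have hB2 : (0:ℝ) ≤ B₁^2*c₀ := mul_nonneg (sq_nonneg B₁) hc₀0
      have h2 := mul_le_mul_of_nonneg_left hDineq (by norm_num : (0:ℝ) ≤ 2)
      calc 2*(π*R₁*K₁*c₀/(1+γ)) + B₁^2*c₀ + 18*π*c₀*R₁^2*R₁^(-(2+γ))
          = 2*(π*R₁*K₁*c₀/(1+γ) + B₁^2*c₀ + 9*π*c₀*R₁^2*R₁^(-(2+γ))) - B₁^2*c₀ := by ring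
        _ ≤ 2*D - B₁^2*c₀ := sub_le_sub_right h2 _
        _ ≤ 2*D := by linarith only [hB2]
    linarith only [hfinal]
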